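/- Under the hypotheses of the objective-collapse theorem (minimisers q_γ of J_γ(q) = E_q[L] + γ·KL(q‖π) exist, L* = inf L > −∞, π(S_δ) > 0 for all δ > 0), for every ε > 0 the mass assigned by q_γ to the set {θ : L(θ) ≥ L* + ε} tends to 0 as γ → 0. -/

import Mathlib

open MeasureTheory ProbabilityTheory Filter

/-- Kullback–Leibler divergence `KL(q‖π) = ∫ log (dq/dπ) dq` (for `q ≪ π`). -/
noncomputable def KL {Θ : Type*} [MeasurableSpace Θ] (q π : Measure Θ) : ℝ :=
  ∫ θ, llr q π θ ∂q

/-- The SoU / Gibbs objective `J_γ(q) = E_q[L] + γ·KL(q‖π)`. -/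
noncomputable def Jobj {Θ : Type*} [MeasurableSpace Θ] (L : Θ → ℝ) (π : Measure Θ)
    (γ : ℝ) (q : Measure Θ) : ℝ :=
  ∫ θ, L θ ∂q + γ * KL q π

/-!
Compare `q_γ` with the prior conditioned on the sublevel set `S_δ`: that measure has expected
loss at most `L* + δ` and `KL(π(·|S_δ)‖π) = -log π(S_δ)`, so minimality gives
`J_γ(q_γ) ≤ L* + δ - γ log π(S_δ)`. On the other side, Gibbs' inequality and Markov's inequality
applied to `L - L*` give `L* + ε q_γ{L ≥ L* + ε} ≤ E_{q_γ}[L] ≤ J_γ(q_γ)`. Hence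
`ε q_γ{L ≥ L* + ε} ≤ δ - γ log π(S_δ)`; let `γ → 0`, then `δ → 0`.
-/

section Gibbs

variable {Θ : Type*} [MeasurableSpace Θ]

lemma KL_nonneg {q π : Measure Θ} [IsFiniteMeasure q] [IsFiniteMeasure π] (hac : q ≪ π)
    (huniv : q Set.univ = π Set.univ) : 0 ≤ KL q π := by
  rw [KL, ← InformationTheory.toReal_klDiv_of_measure_eq hac huniv]
  exact ENNReal.toReal_nonneg

lemma rnDeriv_cond_self (π : Measure Θ) [IsFiniteMeasure π] {s : Set Θ}
    (hs : MeasurableSet s) (hπs : π s ≠ 0) :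
    (π[|s]).rnDeriv π =ᵐ[π] fun θ => (π s)⁻¹ * s.indicator 1 θ := by
  filter_upwards [Measure.rnDeriv_restrict_self π hs,
    Measure.rnDeriv_smul_left_of_ne_top (π.restrict s) π (ENNReal.inv_ne_top.2 hπs)]
    with θ hrestrict hsmul
  rw [ProbabilityTheory.cond, hsmul, Pi.smul_apply, hrestrict, smul_eq_mul]

lemma KL_cond_self (π : Measure Θ) [IsFiniteMeasure π] {s : Set Θ}
    (hs : MeasurableSet s) (hπs : π s ≠ 0) : KL (π[|s]) π = -Real.log (π.real s) := by
  have : IsProbabilityMeasure (π[|s]) := cond_isProbabilityMeasure hπs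
  have hllr : llr (π[|s]) π =ᵐ[π[|s]] fun _ => -Real.log (π.real s) := by
    filter_upwards [cond_absolutelyContinuous.ae_le (rnDeriv_cond_self π hs hπs),
      ae_cond_mem hs] with θ hrn hθ
    simp only [llr_def, hrn, Set.indicator_of_mem hθ, Pi.one_apply, mul_one, ENNReal.toReal_inv,
      Real.log_inv, measureReal_def]
  rw [KL, integral_congr_ae hllr, integral_const, probReal_univ, one_smul]

lemma integral_cond_le_of_mem_Icc {π : Measure Θ} [IsFiniteMeasure π] {s : Set Θ}
    (hs : MeasurableSet s) (hπs : π s ≠ 0) {f : Θ → ℝ} (hf : Measurable f) {a b : ℝ}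
    (hfs : ∀ θ ∈ s, f θ ∈ Set.Icc a b) : ∫ θ, f θ ∂π[|s] ≤ b := by
  have : IsProbabilityMeasure (π[|s]) := cond_isProbabilityMeasure hπs
  have hIcc : ∀ᵐ θ ∂π[|s], f θ ∈ Set.Icc a b := ae_cond_of_forall_mem hs hfs
  have hint : Integrable f (π[|s]) :=
    .of_bound hf.aestronglyMeasurable (max |a| |b|)
      (hIcc.mono fun _ h => abs_le_max_abs_abs h.1 h.2)
  calc ∫ θ, f θ ∂π[|s] ≤ ∫ _, b ∂π[|s] :=
        integral_mono_ae hint (integrable_const b) (hIcc.mono fun _ h => h.2)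
    _ = b := by simp

variable {L : Θ → ℝ} {Lstar : ℝ}

lemma Jobj_cond_sublevel_le {π : Measure Θ} [IsFiniteMeasure π] (hL : Measurable L)
    (hlow : ∀ θ, Lstar ≤ L θ) (γ : ℝ) {δ : ℝ} (hπδ : π {θ | L θ ≤ Lstar + δ} ≠ 0) :
    Jobj L π γ (π[|{θ | L θ ≤ Lstar + δ}]) ≤
      Lstar + δ + γ * -Real.log (π.real {θ | L θ ≤ Lstar + δ}) := by
  have hS : MeasurableSet {θ | L θ ≤ Lstar + δ} := measurableSet_le hL measurable_const
  rw [Jobj, KL_cond_self π hS hπδ]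
  gcongr
  exact integral_cond_le_of_mem_Icc hS hπδ hL fun θ hθ => ⟨hlow θ, hθ⟩

lemma add_mul_measureReal_le_integral {q : Measure Θ} [IsProbabilityMeasure q]
    (hlow : ∀ θ, Lstar ≤ L θ) (hint : Integrable L q) (ε : ℝ) :
    Lstar + ε * q.real {θ | Lstar + ε ≤ L θ} ≤ ∫ θ, L θ ∂q := by
  have hmarkov := mul_meas_ge_le_integral_of_nonneg
    (ae_of_all q fun θ => sub_nonneg.2 (hlow θ)) (hint.sub (integrable_const Lstar)) ε
  simp only [le_sub_iff_add_le', integral_sub hint (integrable_const Lstar), integral_const,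
    probReal_univ, one_smul] at hmarkov
  linarith

lemma integral_le_Jobj {π q : Measure Θ} [IsProbabilityMeasure q] [IsProbabilityMeasure π]
    (hac : q ≪ π) {γ : ℝ} (hγ : 0 ≤ γ) : ∫ θ, L θ ∂q ≤ Jobj L π γ q :=
  le_add_of_nonneg_right (mul_nonneg hγ (KL_nonneg hac (by simp)))

end Gibbs

lemma tendsto_zero_of_forall_le_add_mul {ι : Type*} {l : Filter ι} {x γ : ι → ℝ}
    (hx : ∀ i, 0 ≤ x i) (hγ : Tendsto γ l (nhds 0))
    (h : ∀ δ > 0, ∃ C, ∀ i, x i ≤ δ + γ i * C) : Tendsto x l (nhds 0) := by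
  refine tendsto_order.2 ⟨fun a ha => .of_forall fun i => ha.trans_le (hx i), fun a ha => ?_⟩
  obtain ⟨C, hC⟩ := h (a / 2) (half_pos ha)
  have hγC : Tendsto (fun i => γ i * C) l (nhds 0) := by simpa using hγ.mul_const C
  filter_upwards [hγC.eventually_lt_const (half_pos ha)] with i hi
  linarith [hC i]

theorem objective_collapse_mass_general {Θ : Type*} [MeasurableSpace Θ]
    (π : Measure Θ) [IsProbabilityMeasure π]
    (L : Θ → ℝ) (hL : Measurable L)
    (Lstar : ℝ) (hglb : IsGLB (Set.range L) Lstar)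
    (hπ : ∀ δ : ℝ, 0 < δ → 0 < π {θ | L θ ≤ Lstar + δ})
    (γ : ℕ → ℝ) (hγpos : ∀ m, 0 < γ m) (hγ0 : Tendsto γ atTop (nhds 0))
    (q : ℕ → Measure Θ) (hqprob : ∀ m, IsProbabilityMeasure (q m))
    (hqac : ∀ m, q m ≪ π)
    (hqint : ∀ m, Integrable L (q m))
    (hmin : ∀ m, ∀ q' : Measure Θ, IsProbabilityMeasure q' → q' ≪ π →
      Jobj L π (γ m) (q m) ≤ Jobj L π (γ m) q') :
    ∀ ε : ℝ, 0 < ε →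
      Tendsto (fun m => q m {θ | Lstar + ε ≤ L θ}) atTop (nhds 0) := by
  intro ε hε
  have hlow : ∀ θ, Lstar ≤ L θ := fun θ => hglb.1 (Set.mem_range_self θ)
  have hbound : ∀ δ > 0, ∃ C, ∀ m,
      ε * (q m).real {θ | Lstar + ε ≤ L θ} ≤ δ + γ m * C := fun δ hδ => by
    have hπδ := (hπ δ hδ).ne'
    refine ⟨-Real.log (π.real {θ | L θ ≤ Lstar + δ}), fun m => ?_⟩
    have := hqprob m
    linarith [add_mul_measureReal_le_integral hlow (hqint m) ε,
      integral_le_Jobj (L := L) (hqac m) (hγpos m).le,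
      hmin m _ (cond_isProbabilityMeasure hπδ) cond_absolutelyContinuous,
      Jobj_cond_sublevel_le hL hlow (γ m) hπδ]
  have hreal : Tendsto (fun m => (q m).real {θ | Lstar + ε ≤ L θ}) atTop (nhds 0) := by
    simpa [hε.ne'] using
      ((tendsto_zero_of_forall_le_add_mul (fun m => by positivity) hγ0 hbound).const_mul ε⁻¹)
  simpa [ofReal_measureReal] using ENNReal.tendsto_ofReal hreal

/-- Objective collapse, part 2: as `γ → 0`, the minimisers `q_γ` assign vanishing mass to
the set `{θ : L θ ≥ L* + ε}` for every `ε > 0`. -/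
theorem objective_collapse_mass {Θ : Type*} [MeasurableSpace Θ]
    (π : Measure Θ) [IsProbabilityMeasure π]
    (L : Θ → ℝ) (hL : Measurable L)
    (Lstar : ℝ) (hglb : IsGLB (Set.range L) Lstar)
    (hπ : ∀ δ : ℝ, 0 < δ → 0 < π {θ | L θ ≤ Lstar + δ})
    (γ : ℕ → ℝ) (hγpos : ∀ m, 0 < γ m) (hγ0 : Tendsto γ atTop (nhds 0))
    (q : ℕ → Measure Θ) (hqprob : ∀ m, IsProbabilityMeasure (q m))
    (hqac : ∀ m, q m ≪ π)
    (hqint : ∀ m, Integrable L (q m)) (hqllr : ∀ m, Integrable (llr (q m) π) (q m))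
    (hmin : ∀ m, ∀ q' : Measure Θ, IsProbabilityMeasure q' → q' ≪ π →
      Jobj L π (γ m) (q m) ≤ Jobj L π (γ m) q') :
    ∀ ε : ℝ, 0 < ε →
      Tendsto (fun m => q m {θ | Lstar + ε ≤ L θ}) atTop (nhds 0) :=
  objective_collapse_mass_general π L hL Lstar hglb hπ γ hγpos hγ0 q hqprob hqac hqint hmin
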